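/- arXiv:2108.01994 — 3 statements merged into one kernel-verified Lean document; each statement's English description precedes it below -/
import Mathlib

section
/- Let κ = (κ_1, …, κ_{p−1}) and κ' = (κ'_1, …, κ'_{p−1}) be two stagings of 𝕏. Then M_κ ⊆ M_{κ'} if and only if for every i ∈ {1, …, p−1} and all x, x' ∈ 𝕏_{[i]}, κ'_i(x) = κ'_i(x') implies κ_i(x) = κ_i(x'). -/
open scoped Classical

/-- Full configurations of the `p` variables `X 0, …, X (p-1)`. -/
abbrev Cfg {p : ℕ} (X : Fin p → Type) : Type := ∀ j : Fin p, X j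

/-- Prefixes of length `i`: assignments of values to the first `i` variables. -/
abbrev Pref {p : ℕ} (X : Fin p → Type) (i : ℕ) : Type :=
  ∀ j : Fin p, (j : ℕ) < i → X j

/-- The full configuration `y` extends the prefix `x`. -/
def Agrees {p : ℕ} {X : Fin p → Type} {i : ℕ} (y : Cfg X) (x : Pref X i) : Prop :=
  ∀ (j : Fin p) (h : (j : ℕ) < i), y j = x j h

/-- The probability (under the mass function `P`) that the first `i` variables take the
values prescribed by the prefix `x`. -/
noncomputable def prefProb {p : ℕ} {X : Fin p → Type} [∀ j, Fintype (X j)]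
    (P : Cfg X → ℝ) {i : ℕ} (x : Pref X i) : ℝ :=
  ∑ y : Cfg X, if Agrees y x then P y else 0

/-- The conditional probability `P(X_{i+1} = z | (X_1, …, X_i) = x)` (with `i` zero-based:
the variable indexed by `i : Fin p` given the values `x` of the preceding variables). -/
noncomputable def condProb {p : ℕ} {X : Fin p → Type} [∀ j, Fintype (X j)]
    (P : Cfg X → ℝ) (i : Fin p) (x : Pref X i.1) (z : X i) : ℝ :=
  (∑ y : Cfg X, if Agrees y x ∧ y i = z then P y else 0) / prefProb P x

/-- Membership in the staged tree model `M_κ` of the staging `κ`: `P` is a strictly positive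
probability mass function whose conditional distributions coincide on vertices in the
same stage, at every level `i ∈ {1, …, p-1}` (zero-based: `1 ≤ i < p`). -/
def MemStagedModel {p : ℕ} {X : Fin p → Type} [∀ j, Fintype (X j)] {C : Type*}
    (κ : (i : Fin p) → Pref X i.1 → C) (P : Cfg X → ℝ) : Prop :=
  (∀ y : Cfg X, 0 < P y) ∧ (∑ y : Cfg X, P y = 1) ∧
    ∀ i : Fin p, 1 ≤ (i : ℕ) → ∀ x x' : Pref X i.1, κ i x = κ i x' →
      ∀ z : X i, condProb P i x z = condProb P i x' z

/-- Membership in the Bayesian network model `M_G` of a DAG on `{1, …, p}` whose edges all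
point from lower to higher indices; the DAG is encoded by its edge relation `E`
(`E j i` means there is an edge from `j` to `i`, i.e. `j` is a parent of `i`). -/
def MemBNModel {p : ℕ} {X : Fin p → Type} [∀ j, Fintype (X j)]
    (E : Fin p → Fin p → Prop) (P : Cfg X → ℝ) : Prop :=
  (∀ y : Cfg X, 0 ≤ P y) ∧ (∑ y : Cfg X, P y = 1) ∧
    ∃ g : (i : Fin p) → X i → ((j : Fin p) → E j i → X j) → ℝ,
      (∀ (i : Fin p) (z : X i) (par : (j : Fin p) → E j i → X j),
        g i z par ∈ Set.Ioo (0 : ℝ) 1) ∧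
      (∀ (i : Fin p) (par : (j : Fin p) → E j i → X j), ∑ z : X i, g i z par = 1) ∧
      (∀ y : Cfg X, P y = ∏ i : Fin p, g i (y i) (fun j _ => y j))

/-- The edge relation of the DAG `G_κ` associated to a staging `κ`: there is an edge
from `k` to `i` iff `k < i` and there are two prefixes of length `i` differing only in
coordinate `k` that receive different colors. -/
def stagingEdge {p : ℕ} {X : Fin p → Type} {C : Type*}
    (κ : (i : Fin p) → Pref X i.1 → C) (k i : Fin p) : Prop :=
  (k : ℕ) < (i : ℕ) ∧ ∃ x x' : Pref X i.1,
    (∀ (j : Fin p) (h : (j : ℕ) < (i : ℕ)), j ≠ k → x j h = x' j h) ∧ κ i x ≠ κ i x'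

/-- The staging `κ^G` induced by a DAG with edge relation `E` (all of whose edges point
from lower to higher indices): the color of a prefix of length `i` is its projection onto
the parent coordinates of vertex `i`. -/
def indStaging {p : ℕ} {X : Fin p → Type} (E : Fin p → Fin p → Prop)
    (hE : ∀ k i : Fin p, E k i → (k : ℕ) < (i : ℕ)) :
    (i : Fin p) → Pref X i.1 → ((i : Fin p) × ((j : Fin p) → E j i → X j)) :=
  fun i x => ⟨i, fun j h => x j (hE j i h)⟩

section Aux
variable {p : ℕ} {X : Fin p → Type} [∀ j, Fintype (X j)]

/-- extend a prefix of length m by one value -/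
def extPref {m : ℕ} (x : Pref X m) (hm : m < p) (z : X ⟨m, hm⟩) : Pref X (m+1) :=
  fun j h => if hj : (j : ℕ) < m then x j hj
    else cast (congrArg X (Fin.ext (show ((⟨m, hm⟩ : Fin p) : ℕ) = (j : ℕ) from
      le_antisymm (not_lt.mp hj) (Nat.lt_succ_iff.mp h)))) z

lemma agrees_extPref {m : ℕ} (x : Pref X m) (hm : m < p) (z : X ⟨m, hm⟩) (y : Cfg X) :
    Agrees y (extPref x hm z) ↔ Agrees y x ∧ y ⟨m, hm⟩ = z := by
  constructor
  · intro hA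
    constructor
    · intro j h
      have := hA j (h.trans (Nat.lt_succ_self m))
      rwa [extPref, dif_pos h] at this
    · have := hA ⟨m, hm⟩ (Nat.lt_succ_self m)
      rw [extPref, dif_neg (lt_irrefl m)] at this
      exact this
  · rintro ⟨hA, hz⟩ j h
    by_cases hj : (j : ℕ) < m
    · rw [extPref, dif_pos hj]; exact hA j hj
    · have hjm : (j : ℕ) = m := le_antisymm (Nat.lt_succ_iff.mp h) (not_lt.mp hj)
      have hje : j = ⟨m, hm⟩ := Fin.ext hjm
      subst hje
      rw [extPref, dif_neg hj]
      exact hz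
end Aux

section Aux2
set_option linter.unusedSectionVars false
variable {p : ℕ} {X : Fin p → Type} [∀ j, Fintype (X j)]
variable (q : (i : Fin p) → Pref X i.1 → X i → ℝ)

noncomputable def Pdef : Cfg X → ℝ := fun y => ∏ i : Fin p, q i (fun j _ => y j) (y i)

noncomputable def Fprod (m : ℕ) (x : Pref X m) : ℝ :=
  ∏ i : Fin p, if h : (i : ℕ) < m then q i (fun j hj => x j (hj.trans h)) (x i h) else 1

lemma Fprod_succ {m : ℕ} (x : Pref X m) (hm : m < p) (z : X ⟨m, hm⟩) :
    Fprod q (m+1) (extPref x hm z) = Fprod q m x * q ⟨m, hm⟩ x z := by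
  have key : ∀ i : Fin p,
      (if h : (i : ℕ) < m + 1 then
        q i (fun j hj => extPref x hm z j (hj.trans h)) (extPref x hm z i h) else 1)
      = (if h : (i : ℕ) < m then q i (fun j hj => x j (hj.trans h)) (x i h) else 1) *
        (if i = ⟨m, hm⟩ then q ⟨m, hm⟩ x z else 1) := by
    intro i
    by_cases him : i = ⟨m, hm⟩
    · subst him
      rw [dif_pos (Nat.lt_succ_self m), dif_neg (lt_irrefl m), if_pos rfl, one_mul]
      congr 1
      · funext j hj
        exact dif_pos hj
      · show extPref x hm z ⟨m, hm⟩ (Nat.lt_succ_self m) = z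
        rw [extPref, dif_neg (lt_irrefl m)]
        exact eq_of_heq (cast_heq _ z)
    · rw [if_neg him, mul_one]
      have hne : (i : ℕ) ≠ m := fun hh => him (Fin.ext hh)
      by_cases h : (i : ℕ) < m
      · rw [dif_pos (h.trans (Nat.lt_succ_self m)), dif_pos h]
        congr 1
        · funext j hj
          exact dif_pos (hj.trans h)
        · exact dif_pos h
      · rw [dif_neg h, dif_neg (fun hh => h (lt_of_le_of_ne (Nat.lt_succ_iff.mp hh) hne))]
  calc Fprod q (m+1) (extPref x hm z)
      = ∏ i : Fin p, ((if h : (i : ℕ) < m then q i (fun j hj => x j (hj.trans h)) (x i h) else 1) *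
        (if i = ⟨m, hm⟩ then q ⟨m, hm⟩ x z else 1)) := Finset.prod_congr rfl (fun i _ => key i)
    _ = Fprod q m x * q ⟨m, hm⟩ x z := by
        rw [Finset.prod_mul_distrib, Fprod, Finset.prod_ite_eq' Finset.univ (⟨m, hm⟩ : Fin p)
          (fun _ => q ⟨m, hm⟩ x z), if_pos (Finset.mem_univ _)]
end Aux2


section Aux3
set_option linter.unusedSectionVars false
variable {p : ℕ} {X : Fin p → Type} [∀ j, Fintype (X j)]
variable (q : (i : Fin p) → Pref X i.1 → X i → ℝ)

lemma prefProb_split {m : ℕ} (P : Cfg X → ℝ) (x : Pref X m) (hm : m < p) :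
    prefProb P x = ∑ z : X ⟨m, hm⟩, prefProb P (extPref x hm z) := by
  unfold prefProb
  rw [Finset.sum_comm]
  apply Finset.sum_congr rfl
  intro y _
  by_cases hA : Agrees y x
  · simp [agrees_extPref, hA, Finset.sum_ite_eq]
  · simp [agrees_extPref, hA]

lemma prefProb_eq_Fprod (hq1 : ∀ (i : Fin p) (x : Pref X i.1), ∑ z : X i, q i x z = 1) :
    ∀ (k m : ℕ), p - m = k → m ≤ p → ∀ x : Pref X m, prefProb (Pdef q) x = Fprod q m x := by
  intro k
  induction k with
  | zero =>
    intro m hk hmp x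
    have hmp' : m = p := le_antisymm hmp (Nat.sub_eq_zero_iff_le.mp hk)
    subst hmp'
    set y₀ : Cfg X := fun j => x j j.isLt with hy₀
    have hag : ∀ y : Cfg X, Agrees y x ↔ y = y₀ := by
      intro y
      constructor
      · intro hA; funext j; exact hA j j.isLt
      · rintro rfl j h; rfl
    unfold prefProb
    calc (∑ y : Cfg X, if Agrees y x then Pdef q y else 0)
        = ∑ y : Cfg X, if y = y₀ then Pdef q y else 0 :=
          Finset.sum_congr rfl (fun y _ => by rw [if_congr (hag y) rfl rfl])
      _ = Pdef q y₀ := by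
          rw [Finset.sum_ite_eq' Finset.univ y₀ (Pdef q), if_pos (Finset.mem_univ _)]
      _ = Fprod q m x := by
          unfold Pdef Fprod
          apply Finset.prod_congr rfl
          intro i _
          rw [dif_pos i.isLt]
  | succ k ih =>
    intro m hk hmp x
    have hm : m < p := by omega
    rw [prefProb_split (Pdef q) x hm]
    have : ∀ z : X ⟨m, hm⟩, prefProb (Pdef q) (extPref x hm z) = Fprod q m x * q ⟨m, hm⟩ x z := by
      intro z
      rw [ih (m+1) (by omega) (by omega) (extPref x hm z), Fprod_succ]
    rw [Finset.sum_congr rfl (fun z _ => this z), ← Finset.mul_sum, hq1, mul_one]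

lemma Fprod_pos (hq0 : ∀ (i : Fin p) (x : Pref X i.1) (z : X i), 0 < q i x z)
    {m : ℕ} (x : Pref X m) : 0 < Fprod q m x := by
  apply Finset.prod_pos
  intro i _
  by_cases h : (i : ℕ) < m
  · rw [dif_pos h]; exact hq0 _ _ _
  · rw [dif_neg h]; exact one_pos

lemma condProb_Pdef (hq0 : ∀ (i : Fin p) (x : Pref X i.1) (z : X i), 0 < q i x z)
    (hq1 : ∀ (i : Fin p) (x : Pref X i.1), ∑ z : X i, q i x z = 1)
    (i : Fin p) (x : Pref X i.1) (z : X i) :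
    condProb (Pdef q) i x z = q i x z := by
  have hnum : (∑ y : Cfg X, if Agrees y x ∧ y i = z then Pdef q y else 0)
      = prefProb (Pdef q) (extPref x i.isLt z) := by
    unfold prefProb
    apply Finset.sum_congr rfl
    intro y _
    have hiff := agrees_extPref x i.isLt z y
    by_cases hc : Agrees y (extPref x i.isLt z)
    · rw [if_pos (hiff.mp hc), if_pos hc]
    · rw [if_neg (fun hh => hc (hiff.mpr hh)), if_neg hc]
  have hpre : prefProb (Pdef q) x = Fprod q i.1 x :=
    prefProb_eq_Fprod q hq1 (p - i.1) i.1 rfl (le_of_lt i.isLt) x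
  rw [condProb, hnum, prefProb_eq_Fprod q hq1 (p - (i.1+1)) (i.1+1) rfl i.isLt _,
    Fprod_succ, hpre]
  exact mul_div_cancel_left₀ _ (ne_of_gt (Fprod_pos q hq0 x))

lemma Pdef_sum (hq1 : ∀ (i : Fin p) (x : Pref X i.1), ∑ z : X i, q i x z = 1) :
    ∑ y : Cfg X, Pdef q y = 1 := by
  have x₀ : Pref X 0 := fun j h => absurd h (Nat.not_lt_zero _)
  have h1 : prefProb (Pdef q) x₀ = Fprod q 0 x₀ :=
    prefProb_eq_Fprod q hq1 (p - 0) 0 rfl (Nat.zero_le p) x₀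
  have h2 : prefProb (Pdef q) x₀ = ∑ y : Cfg X, Pdef q y := by
    unfold prefProb
    apply Finset.sum_congr rfl
    intro y _
    rw [if_pos]
    intro j h
    exact absurd h (Nat.not_lt_zero _)
  have h3 : Fprod q 0 x₀ = 1 := by
    unfold Fprod
    apply Finset.prod_eq_one
    intro i _
    rw [dif_neg (Nat.not_lt_zero _)]
  rw [← h2, h1, h3]
end Aux3

/-- For two stagings `κ` and `κ'` of `𝕏`, the staged tree model of `κ` is
contained in that of `κ'` if and only if, for every level `i ∈ {1, …, p-1}` and all
prefixes `x, x'` of length `i`, `κ'ᵢ x = κ'ᵢ x'` implies `κᵢ x = κᵢ x'`. -/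
theorem stagedModel_subset_iff {p : ℕ} (hp : 1 ≤ p) (X : Fin p → Type)
    [∀ j, Fintype (X j)] (h2 : ∀ j, 2 ≤ Fintype.card (X j))
    {C C' : Type} (κ : (i : Fin p) → Pref X i.1 → C)
    (κ' : (i : Fin p) → Pref X i.1 → C') :
    (∀ P : Cfg X → ℝ, MemStagedModel κ P → MemStagedModel κ' P) ↔
      (∀ i : Fin p, 1 ≤ (i : ℕ) → ∀ x x' : Pref X i.1,
        κ' i x = κ' i x' → κ i x = κ i x') := by
  constructor
  · intro hsub i hi x0 x0' hκ'
    by_contra hκ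
    have hne : ∀ j : Fin p, Nonempty (X j) := fun j =>
      Fintype.card_pos_iff.mp (lt_of_lt_of_le two_pos (h2 j))
    set a : ∀ j : Fin p, X j := fun j => Classical.choice (hne j) with ha
    set θ : (j : Fin p) → Pref X j.1 → ℝ :=
      fun j x => if j = i ∧ κ j x = κ i x0 then 1/3 else 1/4 with hθ
    have hθmem : ∀ (j : Fin p) (x : Pref X j.1), θ j x = 1/3 ∨ θ j x = 1/4 := by
      intro j x
      by_cases h : j = i ∧ κ j x = κ i x0
      · left; simp [hθ, h]
      · right; simp [hθ, h]
    have hθpos : ∀ (j : Fin p) (x : Pref X j.1), 0 < θ j x := by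
      intro j x; rcases hθmem j x with h | h <;> rw [h] <;> norm_num
    have hθlt : ∀ (j : Fin p) (x : Pref X j.1), θ j x < 1 := by
      intro j x; rcases hθmem j x with h | h <;> rw [h] <;> norm_num
    set q : (j : Fin p) → Pref X j.1 → X j → ℝ :=
      fun j x z => if z = a j then θ j x
        else (1 - θ j x) / ((Fintype.card (X j) : ℝ) - 1) with hq
    have hcard : ∀ j : Fin p, (1 : ℝ) ≤ (Fintype.card (X j) : ℝ) - 1 := by
      intro j
      have := h2 j
      have : (2 : ℝ) ≤ (Fintype.card (X j) : ℝ) := by exact_mod_cast this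
      linarith
    have hq0 : ∀ (j : Fin p) (x : Pref X j.1) (z : X j), 0 < q j x z := by
      intro j x z
      simp only [hq]
      by_cases h : z = a j
      · rw [if_pos h]; exact hθpos j x
      · rw [if_neg h]
        apply div_pos
        · linarith [hθlt j x]
        · linarith [hcard j]
    have hq1 : ∀ (j : Fin p) (x : Pref X j.1), ∑ z : X j, q j x z = 1 := by
      intro j x
      set A := θ j x
      set B := (1 - A) / ((Fintype.card (X j) : ℝ) - 1) with hB
      have step : ∀ z : X j, q j x z = B + (if z = a j then A - B else 0) := by
        intro z
        simp only [hq]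
        by_cases h : z = a j
        · rw [if_pos h, if_pos h]; ring
        · rw [if_neg h, if_neg h]; ring
      rw [Finset.sum_congr rfl (fun z _ => step z), Finset.sum_add_distrib,
        Finset.sum_const, Finset.sum_ite_eq' Finset.univ (a j) (fun _ => A - B),
        if_pos (Finset.mem_univ _), Finset.card_univ, nsmul_eq_mul, hB]
      have h1 : (Fintype.card (X j) : ℝ) - 1 ≠ 0 := by linarith [hcard j]
      field_simp
      ring
    have hmem : MemStagedModel κ (Pdef q) := by
      refine ⟨fun y => Finset.prod_pos (fun j _ => hq0 j _ _), Pdef_sum q hq1, ?_⟩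
      intro j hj x x' hcol z
      rw [condProb_Pdef q hq0 hq1, condProb_Pdef q hq0 hq1]
      have hθeq : θ j x = θ j x' := by simp only [hθ, hcol]
      simp only [hq, hθeq]
    obtain ⟨-, -, hcond'⟩ := hsub (Pdef q) hmem
    have heq := hcond' i hi x0 x0' hκ' (a i)
    rw [condProb_Pdef q hq0 hq1, condProb_Pdef q hq0 hq1] at heq
    have e1 : q i x0 (a i) = 1/3 := by
      simp [hq, hθ]
    have e2 : q i x0' (a i) = 1/4 := by
      have hne' : ¬κ i x0' = κ i x0 := fun hc => hκ hc.symm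
      simp [hq, hθ, hne']
    rw [e1, e2] at heq
    norm_num at heq
  · rintro h P ⟨hpos, hsum, hcond⟩
    exact ⟨hpos, hsum, fun i hi x x' hc z => hcond i hi x x' (h i hi x x' hc) z⟩
end

section
/- For any staging κ of 𝕏, the staged tree model is contained in the Bayesian network model of the associated DAG: M_κ ⊆ M_{G_κ}. -/
open scoped Classical

section Aux

variable {p : ℕ} {X : Fin p → Type} [∀ j, Fintype (X j)]

/-- Extend a prefix to a full configuration using default values `d`. -/
noncomputable def extP (d : ∀ j, X j) {i : ℕ} (x : Pref X i) : Cfg X :=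
  fun j => if h : (j : ℕ) < i then x j h else d j

lemma agrees_extP (d : ∀ j, X j) {i : ℕ} (x : Pref X i) : Agrees (extP d x) x := by
  intro j h; simp [extP, h]

lemma prefProb_pos' {P : Cfg X → ℝ} (hP : ∀ y, 0 < P y) (d : ∀ j, X j)
    {i : ℕ} (x : Pref X i) : 0 < prefProb P x := by
  unfold prefProb
  apply Finset.sum_pos'
  · intro y _; split_ifs with h
    · exact (hP y).le
    · exact le_refl 0
  · refine ⟨extP d x, Finset.mem_univ _, ?_⟩
    rw [if_pos (agrees_extP d x)]; exact hP _

lemma num_pos' {P : Cfg X → ℝ} (hP : ∀ y, 0 < P y) (d : ∀ j, X j)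
    (i : Fin p) (x : Pref X i.1) (z : X i) :
    0 < ∑ y : Cfg X, if Agrees y x ∧ y i = z then P y else 0 := by
  apply Finset.sum_pos'
  · intro y _; split_ifs with h
    · exact (hP y).le
    · exact le_refl 0
  · refine ⟨Function.update (extP d x) i z, Finset.mem_univ _, ?_⟩
    have hA : Agrees (Function.update (extP d x) i z) x := by
      intro j h
      have hji : j ≠ i := by
        intro hc; subst hc; exact absurd h (lt_irrefl _)
      rw [Function.update_of_ne hji]
      exact agrees_extP d x j h
    rw [if_pos ⟨hA, Function.update_self i z _⟩]
    exact hP _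

lemma num_lt' {P : Cfg X → ℝ} (hP : ∀ y, 0 < P y) (d : ∀ j, X j)
    (h2 : ∀ j, 2 ≤ Fintype.card (X j))
    (i : Fin p) (x : Pref X i.1) (z : X i) :
    (∑ y : Cfg X, if Agrees y x ∧ y i = z then P y else 0) < prefProb P x := by
  obtain ⟨z', hz'⟩ := Fintype.exists_ne_of_one_lt_card (by have := h2 i; omega) z
  unfold prefProb
  apply Finset.sum_lt_sum
  · intro y _
    split_ifs with h1 h2' h2'
    · exact le_refl _
    · exact absurd h1.1 h2'
    · exact (hP y).le
    · exact le_refl 0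
  · refine ⟨Function.update (extP d x) i z', Finset.mem_univ _, ?_⟩
    have hA : Agrees (Function.update (extP d x) i z') x := by
      intro j h
      have hji : j ≠ i := by
        intro hc; subst hc; exact absurd h (lt_irrefl _)
      rw [Function.update_of_ne hji]
      exact agrees_extP d x j h
    have hne : ¬ (Agrees (Function.update (extP d x) i z') x ∧
        (Function.update (extP d x) i z') i = z) := by
      rintro ⟨-, hc⟩
      rw [Function.update_self] at hc
      exact hz' hc
    rw [if_neg hne, if_pos hA]
    exact hP _

lemma sum_num' (P : Cfg X → ℝ) (i : Fin p) (x : Pref X i.1) :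
    ∑ z : X i, (∑ y : Cfg X, if Agrees y x ∧ y i = z then P y else 0) = prefProb P x := by
  rw [Finset.sum_comm]
  unfold prefProb
  apply Finset.sum_congr rfl
  intro y _
  by_cases hA : Agrees y x
  · simp only [hA, true_and, if_pos]
    rw [Finset.sum_ite_eq Finset.univ (y i) (fun _ => P y)]
    simp
  · simp [hA]

/-- The color of a prefix depends only on the parent coordinates. -/
lemma color_eq {C : Type*} (κ : (i : Fin p) → Pref X i.1 → C) (i : Fin p)
    (x x' : Pref X i.1)
    (hpar : ∀ (j : Fin p) (h : (j : ℕ) < i.1), stagingEdge κ j i → x j h = x' j h) :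
    κ i x = κ i x' := by
  have key : ∀ m : ℕ,
      κ i (fun j h => if (j : ℕ) < m then x' j h else x j h) = κ i x := by
    intro m
    induction m with
    | zero => congr 1
    | succ m ih =>
      rw [← ih]
      by_contra hne
      have hmi : m < i.1 := by
        by_contra hge
        apply hne
        congr 1
        funext j h
        have h1 : (j : ℕ) < m := by omega
        have h2 : (j : ℕ) < m + 1 := by omega
        simp [h1, h2]
      have hm : m < p := lt_trans hmi i.isLt
      set mf : Fin p := ⟨m, hm⟩ with hmf
      have hedge : stagingEdge κ mf i := by
        refine ⟨hmi, _, _, ?_, hne⟩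
        intro j h hj
        have hjm : (j : ℕ) ≠ m := by
          intro hc; exact hj (Fin.ext hc)
        by_cases h1 : (j : ℕ) < m
        · simp [h1, Nat.lt_succ_of_lt h1]
        · have h2 : ¬ (j : ℕ) < m + 1 := by omega
          simp [h1, h2]
      have heq := hpar mf hmi hedge
      apply hne
      congr 1
      funext j h
      by_cases h1 : (j : ℕ) < m
      · simp [h1, Nat.lt_succ_of_lt h1]
      · by_cases h2 : (j : ℕ) < m + 1
        · have hjm : j = mf := Fin.ext (show (j:ℕ) = m by omega)
          subst hjm
          simp only [h1, if_false, h2, if_true]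
          exact heq.symm
        · simp [h1, h2]
  have hk := key i.1
  rw [← hk]
  congr 1
  funext j h
  simp [h]

end Aux


section Aux2

variable {p : ℕ} {X : Fin p → Type} [∀ j, Fintype (X j)]

lemma prefProb_zero (P : Cfg X → ℝ) (x : Pref X 0) :
    prefProb P x = ∑ y : Cfg X, P y := by
  unfold prefProb
  apply Finset.sum_congr rfl
  intro y _
  rw [if_pos]
  intro j h
  exact absurd h (Nat.not_lt_zero _)

lemma prefProb_top (P : Cfg X → ℝ) (y : Cfg X) :
    prefProb P (fun (j : Fin p) (_ : (j : ℕ) < p) => y j) = P y := by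
  unfold prefProb
  have : ∀ w : Cfg X,
      (if Agrees w (fun (j : Fin p) (_ : (j : ℕ) < p) => y j) then P w else 0)
      = if w = y then P w else 0 := by
    intro w
    congr 1
    apply propext
    constructor
    · intro h; funext j; exact h j j.isLt
    · intro h; subst h; intro j hj; rfl
  rw [Finset.sum_congr rfl (fun w _ => this w)]
  rw [Finset.sum_ite_eq' Finset.univ y P]
  simp

lemma agrees_succ (y w : Cfg X) (m : ℕ) (hm : m < p) :
    Agrees w (fun (j : Fin p) (_ : (j : ℕ) < m + 1) => y j)
      ↔ Agrees w (fun (j : Fin p) (_ : (j : ℕ) < m) => y j) ∧ w ⟨m, hm⟩ = y ⟨m, hm⟩ := by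
  constructor
  · intro h
    exact ⟨fun j hj => h j (Nat.lt_succ_of_lt hj), h ⟨m, hm⟩ (Nat.lt_succ_self m)⟩
  · rintro ⟨h1, h2⟩ j hj
    rcases Nat.lt_succ_iff_lt_or_eq.mp hj with h | h
    · exact h1 j h
    · have : j = ⟨m, hm⟩ := Fin.ext h
      subst this
      exact h2

lemma telescope {P : Cfg X → ℝ} (hP : ∀ y, 0 < P y) (hsum : ∑ y : Cfg X, P y = 1)
    (d : ∀ j, X j) (y : Cfg X) :
    P y = ∏ i : Fin p, condProb P i (fun j _ => y j) (y i) := by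
  set f : ℕ → ℝ := fun i =>
    if h : i < p then condProb P ⟨i, h⟩ (fun j _ => y j) (y ⟨i, h⟩) else 1 with hf
  have key : ∀ m, m ≤ p →
      prefProb P (fun (j : Fin p) (_ : (j : ℕ) < m) => y j) = ∏ i ∈ Finset.range m, f i := by
    intro m
    induction m with
    | zero => intro _; simp [prefProb_zero P _, hsum]
    | succ m ih =>
      intro hm1
      have hm : m < p := hm1
      rw [Finset.prod_range_succ, ← ih (le_of_lt hm)]
      have hfm : f m = condProb P ⟨m, hm⟩ (fun j _ => y j) (y ⟨m, hm⟩) := by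
        rw [hf]; simp [hm]
      rw [hfm]
      unfold condProb
      have hden : prefProb P (fun (j : Fin p) (_ : (j : ℕ) < m) => y j) ≠ 0 :=
        (prefProb_pos' hP d _).ne'
      have hnum : (∑ w : Cfg X,
          if Agrees w (fun (j : Fin p) (_ : (j : ℕ) < m) => y j) ∧ w ⟨m, hm⟩ = y ⟨m, hm⟩
          then P w else 0)
          = prefProb P (fun (j : Fin p) (_ : (j : ℕ) < m + 1) => y j) := by
        unfold prefProb
        apply Finset.sum_congr rfl
        intro w _
        congr 1
        exact propext (agrees_succ y w m hm).symm
      rw [hnum, mul_comm, div_mul_cancel₀ _ hden]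
  have hfin : ∏ i : Fin p, condProb P i (fun j _ => y j) (y i)
      = ∏ i ∈ Finset.range p, f i := by
    rw [← Fin.prod_univ_eq_prod_range f p]
    apply Finset.prod_congr rfl
    intro i _
    simp [hf, i.isLt]
  rw [hfin, ← key p le_rfl, prefProb_top P y]

end Aux2


/-- For any staging `κ` of `𝕏`, the staged tree model is contained in the
Bayesian network model of the associated DAG `G_κ`: `M_κ ⊆ M_{G_κ}`. -/
theorem stagedModel_subset_bnModel {p : ℕ} (hp : 1 ≤ p) (X : Fin p → Type)
    [∀ j, Fintype (X j)] (h2 : ∀ j, 2 ≤ Fintype.card (X j))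
    {C : Type} (κ : (i : Fin p) → Pref X i.1 → C) :
    ∀ P : Cfg X → ℝ, MemStagedModel κ P → MemBNModel (stagingEdge κ) P := by
  intro P hM
  obtain ⟨hpos, hsum, hstage⟩ := hM
  have hne : ∀ j, Nonempty (X j) := fun j =>
    Fintype.card_pos_iff.mp (by have := h2 j; omega)
  let d : ∀ j, X j := fun j => (hne j).some
  refine ⟨fun y => (hpos y).le, hsum, ?_⟩
  -- conditional probability depends only on parent coordinates
  have hcond : ∀ (i : Fin p) (x x' : Pref X i.1),
      (∀ (j : Fin p) (h : (j : ℕ) < i.1), stagingEdge κ j i → x j h = x' j h) →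
      ∀ z : X i, condProb P i x z = condProb P i x' z := by
    intro i x x' hpar z
    rcases Nat.eq_zero_or_pos i.1 with h0 | h1
    · have hxx : x = x' := by
        funext j h
        rw [h0] at h
        exact absurd h (Nat.not_lt_zero _)
      rw [hxx]
    · exact hstage i h1 x x' (color_eq κ i x x' hpar) z
  -- reference prefix built from parent values
  let ref : (i : Fin p) → ((j : Fin p) → stagingEdge κ j i → X j) → Pref X i.1 :=
    fun i par j _ => if he : stagingEdge κ j i then par j he else d j
  refine ⟨fun i z par => condProb P i (ref i par) z, ?_, ?_, ?_⟩
  · intro i z par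
    constructor
    · show (0:ℝ) < condProb P i (ref i par) z
      exact div_pos (num_pos' hpos d i (ref i par) z) (prefProb_pos' hpos d _)
    · show condProb P i (ref i par) z < 1
      unfold condProb
      rw [div_lt_one (prefProb_pos' hpos d _)]
      exact num_lt' hpos d h2 i (ref i par) z
  · intro i par
    show ∑ z : X i, condProb P i (ref i par) z = 1
    unfold condProb
    rw [← Finset.sum_div, sum_num' P i (ref i par),
      div_self (prefProb_pos' hpos d _).ne']
  · intro y
    show P y = ∏ i : Fin p, condProb P i (ref i (fun j _ => y j)) (y i)
    rw [telescope hpos hsum d y]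
    apply Finset.prod_congr rfl
    intro i _
    apply hcond i
    intro j h he
    simp only [ref, he, dif_pos]
end

section
/- Graph recovery: let G be a DAG on {1, …, p} all of whose edges (j, i) satisfy j < i, and let κ^G be its induced staging. Since every 𝕏_j has at least two elements, the DAG G_{κ^G} constructed from the staging κ^G has exactly the same edge set as G; that is, G_{κ^G} = G. -/
open scoped Classical

/-- Graph recovery: for a DAG `G` on `{1, …, p}` with all edges pointing
from lower to higher indices, since every `𝕏_j` has at least two elements, the DAG
`G_{κ^G}` constructed from the induced staging `κ^G` has exactly the same edges as `G`. -/
theorem stagingEdge_indStaging_eq {p : ℕ} (hp : 1 ≤ p) (X : Fin p → Type)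
    [∀ j, Fintype (X j)] (h2 : ∀ j, 2 ≤ Fintype.card (X j))
    (E : Fin p → Fin p → Prop) (hE : ∀ k i : Fin p, E k i → (k : ℕ) < (i : ℕ)) :
    ∀ k i : Fin p, stagingEdge (indStaging (X := X) E hE) k i ↔ E k i := by
  intro k i
  constructor
  · rintro ⟨hki, x, x', hag, hne⟩
    by_contra hEki
    apply hne
    unfold indStaging
    congr 1
    funext j h
    exact hag j (hE j i h) (fun hjk => hEki (hjk ▸ h))
  · intro hEki
    have hki := hE k i hEki
    obtain ⟨a, b, hab⟩ := Fintype.exists_pair_of_one_lt_card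
      (show 1 < Fintype.card (X k) by have := h2 k; omega)
    have hnonempty : ∀ j : Fin p, Nonempty (X j) := fun j =>
      Fintype.card_pos_iff.mp (by have := h2 j; omega)
    refine ⟨hki,
      fun j _ => if hjk : j = k then cast (congrArg X hjk.symm) a else (hnonempty j).some,
      fun j _ => if hjk : j = k then cast (congrArg X hjk.symm) b else (hnonempty j).some,
      ?_, ?_⟩
    · intro j h hjk; simp [dif_neg hjk]
    · intro hcol
      unfold indStaging at hcol
      rw [Sigma.mk.inj_iff, heq_iff_eq] at hcol
      replace hcol := hcol.2
      have := congrFun (congrFun hcol k) hEki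
      simp at this
      exact hab this
end
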